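/- arXiv:2208.03759 — 11 statements merged into one kernel-verified Lean document; each statement's English description precedes it below -/
import Mathlib

section
/- Let L be a lattice with smallest element 0 and → a D-implication on L. Define x' := x → 0. Then (L, ∨, ∧, ') is a dually weakly orthomodular lattice, i.e., for all a ≤ b in L, b ∧ (a ∨ b') = a. -/
theorem stmt_4_general {L : Type*} [Lattice L] [OrderBot L] (impl : L → L → L)
    (h2 : ∀ x y z : L, x ⊔ y ⊔ impl (x ⊔ z) y = impl z (x ⊔ y))
    (h3 : ∀ x y : L, (x ⊔ y) ⊓ impl x y = y) :
    ∀ a b : L, a ≤ b → b ⊓ (a ⊔ impl b ⊥) = a := by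
  intro a b hab
  have sup_neg : a ⊔ impl b ⊥ = impl b a := by
    simpa only [sup_bot_eq, sup_eq_right.mpr hab] using h2 a ⊥ b
  have inf_impl : b ⊓ impl b a = a := by
    simpa only [sup_eq_left.mpr hab] using h3 b a
  rw [sup_neg, inf_impl]

/-- A D-implication on a lattice with 0 yields a dually weakly orthomodular lattice via x' := x → 0. -/
theorem stmt_4 {L : Type*} [Lattice L] [OrderBot L] (impl : L → L → L)
    (h1 : ∀ x y : L, impl (x ⊔ y) x = impl y x)
    (h2 : ∀ x y z : L, x ⊔ y ⊔ impl (x ⊔ z) y = impl z (x ⊔ y))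
    (h3 : ∀ x y : L, (x ⊔ y) ⊓ impl x y = y) :
    ∀ a b : L, a ≤ b → b ⊓ (a ⊔ impl b ⊥) = a :=
  stmt_4_general impl h2 h3
end

section
/- Let (L, ∨, ∧, ') be a dually weakly orthomodular lattice and define x → y := (x ∨ y)' ∨ y. Then → is a D-implication on L, i.e., it satisfies (x ∨ y) → x = y → x, x ∨ y ∨ ((x ∨ z) → y) = z → (x ∨ y), and (x ∨ y) ∧ (x → y) = y. -/
/-- In a dually weakly orthomodular lattice, x → y := (x ⊔ y)' ⊔ y is a D-implication. -/
theorem stmt_5 {L : Type*} [Lattice L] (f : L → L)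
    (dwom : ∀ x y : L, (x ⊔ y) ⊓ (x ⊔ f (x ⊔ y)) = x)
    (impl : L → L → L) (himpl : ∀ x y : L, impl x y = f (x ⊔ y) ⊔ y) :
    (∀ x y : L, impl (x ⊔ y) x = impl y x) ∧
    (∀ x y z : L, x ⊔ y ⊔ impl (x ⊔ z) y = impl z (x ⊔ y)) ∧
    (∀ x y : L, (x ⊔ y) ⊓ impl x y = y) := by
  simp only [himpl]
  refine ⟨fun x y => ?_, fun x y z => ?_, fun x y => ?_⟩
  · rw [sup_comm x y, sup_right_idem]
  · rw [show x ⊔ z ⊔ y = z ⊔ (x ⊔ y) by ac_rfl, sup_comm (f _) y, ← sup_assoc, sup_right_idem,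
      sup_comm]
  · rw [sup_comm x y, sup_comm (f _) y]
    exact dwom y x
end

section
/- Let → be a D-implication on a lattice L. For each a ∈ L, define z^a := z → a for z ≥ a. Then for all a ≤ b ≤ c in L: (1) a ≤ b^a; (2) c ∧ (b ∨ c^a) = b (so each principal filter [a) with operation ^a is a dually weakly orthomodular sublattice); (3) the compatibility condition c^a ∨ b = c^b holds. -/
section DImplication

variable {L : Type*} [Lattice L] {impl : L → L → L}

theorem le_impl_of_inf_impl_eq (h3 : ∀ x y : L, (x ⊔ y) ⊓ impl x y = y) (x y : L) :
    y ≤ impl x y :=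
  (h3 x y).symm.trans_le inf_le_right

theorem inf_impl_of_le (h3 : ∀ x y : L, (x ⊔ y) ⊓ impl x y = y) {x y : L} (hyx : y ≤ x) :
    x ⊓ impl x y = y := by
  simpa only [sup_eq_left.mpr hyx] using h3 x y

theorem impl_sup_of_le_of_le (h2 : ∀ x y z : L, x ⊔ y ⊔ impl (x ⊔ z) y = impl z (x ⊔ y))
    {a b c : L} (hab : a ≤ b) (hbc : b ≤ c) : impl c a ⊔ b = impl c b := by
  simpa only [sup_eq_left.mpr hab, sup_eq_right.mpr hbc, sup_comm b] using h2 b a c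

end DImplication

theorem stmt_8_general {L : Type*} [Lattice L] (impl : L → L → L)
    (h2 : ∀ x y z : L, x ⊔ y ⊔ impl (x ⊔ z) y = impl z (x ⊔ y))
    (h3 : ∀ x y : L, (x ⊔ y) ⊓ impl x y = y) :
    ∀ a b c : L, a ≤ b → b ≤ c →
      a ≤ impl b a ∧ c ⊓ (b ⊔ impl c a) = b ∧ impl c a ⊔ b = impl c b := by
  intro a b c hab hbc
  have compat := impl_sup_of_le_of_le h2 hab hbc
  refine ⟨le_impl_of_inf_impl_eq h3 b a, ?_, compat⟩
  rw [sup_comm, compat, inf_impl_of_le h3 hbc]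

/-- A D-implication induces a family of compatible dually weakly orthomodular sublattices on
principal filters, via z^a := z → a. -/
theorem stmt_8 {L : Type*} [Lattice L] (impl : L → L → L)
    (h1 : ∀ x y : L, impl (x ⊔ y) x = impl y x)
    (h2 : ∀ x y z : L, x ⊔ y ⊔ impl (x ⊔ z) y = impl z (x ⊔ y))
    (h3 : ∀ x y : L, (x ⊔ y) ⊓ impl x y = y) :
    ∀ a b c : L, a ≤ b → b ≤ c →
      a ≤ impl b a ∧ c ⊓ (b ⊔ impl c a) = b ∧ impl c a ⊔ b = impl c b :=
  stmt_8_general impl h2 h3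
end

section
/- Let L be a lattice and suppose for each x ∈ L the principal filter [x) carries a unary operation ^x such that ([x), ∨, ∧, ^x) is dually weakly orthomodular and the compatibility condition z^x ∨ y = z^y holds whenever x ≤ y ≤ z. Define x → y := (x ∨ y)^y. Then → is a D-implication on L. -/
/-! Write `b ^ y` for `op b y`. Within the interval `[y, b]`, `b ^ y` is a relative complement
of `y`: it lies above `y`, so weak orthomodularity of `[y)` applied to `y ≤ b` collapses to `b ⊓ b ^ y = y`.
The other two axioms only reindex the filter elements, the second one through the
compatibility `b ^ y ⊔ a = b ^ a`. -/

theorem inf_op_of_le {L : Type*} [Lattice L] {op : L → L → L}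
    (hmem : ∀ x z : L, x ≤ z → x ≤ op z x)
    (hdwom : ∀ x a b : L, x ≤ a → a ≤ b → b ⊓ (a ⊔ op b x) = a)
    {y b : L} (hyb : y ≤ b) : b ⊓ op b y = y := by
  simpa only [sup_eq_right.mpr (hmem y b hyb)] using hdwom y y b le_rfl hyb

/-- A family of compatible dually weakly orthomodular sublattices on principal filters induces a
D-implication via x → y := (x ⊔ y)^y. Here `op z x` denotes z^x. -/
theorem stmt_9 {L : Type*} [Lattice L] (op : L → L → L)
    (hmem : ∀ x z : L, x ≤ z → x ≤ op z x)
    (hdwom : ∀ x a b : L, x ≤ a → a ≤ b → b ⊓ (a ⊔ op b x) = a)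
    (hcomp : ∀ x y z : L, x ≤ y → y ≤ z → op z x ⊔ y = op z y)
    (impl : L → L → L) (himpl : ∀ x y : L, impl x y = op (x ⊔ y) y) :
    (∀ x y : L, impl (x ⊔ y) x = impl y x) ∧
    (∀ x y z : L, x ⊔ y ⊔ impl (x ⊔ z) y = impl z (x ⊔ y)) ∧
    (∀ x y : L, (x ⊔ y) ⊓ impl x y = y) := by
  refine ⟨fun x y => ?_, fun x y z => ?_, fun x y => ?_⟩
  · rw [himpl, himpl, sup_right_comm, sup_idem, sup_comm x y]
  · have hfilter : x ⊔ z ⊔ y = z ⊔ (x ⊔ y) := by ac_rfl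
    rw [himpl, himpl, hfilter, sup_comm, hcomp y (x ⊔ y) _ le_sup_right le_sup_right]
  · rw [himpl]
    exact inf_op_of_le hmem hdwom le_sup_right
end

section
/- Let (L, ∨, ∧, ', 0, 1) be a bounded lattice with a unary operation satisfying the double negation law (x')' = x, and define x → y := (x' ∧ y') ∨ y (the Sasaki implication). Then (L, ∨, ∧, ') is weakly orthomodular if and only if L satisfies the identities 0' = 1 and (x → 0) → (x ∧ y) = x. -/
theorem apply_bot_eq_top_of_weakOrthomodular {L : Type*} [Lattice L] [BoundedOrder L]
    (f : L → L) (wom : ∀ x y : L, (x ⊓ y) ⊔ (x ⊓ f (x ⊓ y)) = x) : f ⊥ = ⊤ := by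
  simpa using wom ⊤ ⊥

theorem sasakiImpl_sasakiImpl_bot {L : Type*} [Lattice L] [BoundedOrder L] (f : L → L)
    (dneg : ∀ x : L, f (f x) = x)
    (impl : L → L → L) (himpl : ∀ x y : L, impl x y = (f x ⊓ f y) ⊔ y)
    (hbot : f ⊥ = ⊤) (x y : L) :
    impl (impl x ⊥) y = (x ⊓ f y) ⊔ y := by
  have himpl_bot : impl x ⊥ = f x := by rw [himpl, hbot, inf_top_eq, sup_bot_eq]
  rw [himpl_bot, himpl, dneg]

/-- For a bounded lattice with an involution ' and Sasaki implication x → y := (x' ⊓ y') ⊔ y,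
weak orthomodularity is equivalent to the identities 0' = 1 and (x → 0) → (x ⊓ y) = x. -/
theorem stmt_10 {L : Type*} [Lattice L] [BoundedOrder L] (f : L → L)
    (dneg : ∀ x : L, f (f x) = x)
    (impl : L → L → L) (himpl : ∀ x y : L, impl x y = (f x ⊓ f y) ⊔ y) :
    (∀ x y : L, (x ⊓ y) ⊔ (x ⊓ f (x ⊓ y)) = x) ↔
      (f ⊥ = ⊤ ∧ ∀ x y : L, impl (impl x ⊥) (x ⊓ y) = x) := by
  constructor
  · intro wom
    have hbot := apply_bot_eq_top_of_weakOrthomodular f wom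
    exact ⟨hbot, fun x y => by
      rw [sasakiImpl_sasakiImpl_bot f dneg impl himpl hbot, sup_comm, wom]⟩
  · rintro ⟨hbot, hid⟩ x y
    rw [sup_comm, ← sasakiImpl_sasakiImpl_bot f dneg impl himpl hbot, hid]
end

section
/- Let L be a lattice with smallest element 0 and → a W-implication on L. Define x' := x → 0. Then (L, ∨, ∧, ') is a weakly orthomodular lattice satisfying the double negation law (x')' = x. -/
/-- A W-implication on a lattice with 0 yields, via x' := x → 0, a weakly orthomodular lattice
satisfying the double negation law. -/
theorem stmt_11 {L : Type*} [Lattice L] [OrderBot L] (impl : L → L → L)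
    (h1 : ∀ x : L, impl (impl x ⊥) ⊥ = x)
    (h2 : ∀ x y : L, impl (impl (x ⊓ y) ⊥) x = x)
    (h3 : ∀ x y : L, (x ⊓ y) ⊔ impl x ⊥ = impl x y) :
    (∀ x y : L, (x ⊓ y) ⊔ (x ⊓ impl (x ⊓ y) ⊥) = x) ∧
    (∀ x : L, impl (impl x ⊥) ⊥ = x) := by
  refine ⟨fun x y => ?_, h1⟩
  calc (x ⊓ y) ⊔ (x ⊓ impl (x ⊓ y) ⊥)
      = (impl (x ⊓ y) ⊥ ⊓ x) ⊔ impl (impl (x ⊓ y) ⊥) ⊥ := by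
        rw [h1, sup_comm, inf_comm]
    _ = impl (impl (x ⊓ y) ⊥) x := h3 _ _
    _ = x := h2 x y
end

section
/- Let (L, ∨, ∧, ') be a weakly orthomodular lattice with smallest element 0 satisfying the double negation law, and define x → y := x' ∨ (x ∧ y). Then → is a W-implication on L, i.e., (x → 0) → 0 = x, ((x ∧ y) → 0) → x = x, and (x ∧ y) ∨ (x → 0) = x → y. -/
/-- In a weakly orthomodular lattice with 0 satisfying the double negation law,
x → y := x' ⊔ (x ⊓ y) is a W-implication. -/
theorem stmt_12 {L : Type*} [Lattice L] [OrderBot L] (f : L → L)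
    (wom : ∀ x y : L, (x ⊓ y) ⊔ (x ⊓ f (x ⊓ y)) = x)
    (dneg : ∀ x : L, f (f x) = x)
    (impl : L → L → L) (himpl : ∀ x y : L, impl x y = f x ⊔ (x ⊓ y)) :
    (∀ x : L, impl (impl x ⊥) ⊥ = x) ∧
    (∀ x y : L, impl (impl (x ⊓ y) ⊥) x = x) ∧
    (∀ x y : L, (x ⊓ y) ⊔ impl x ⊥ = impl x y) := by
  have impl_bot : ∀ x : L, impl x ⊥ = f x := fun x => by simp [himpl]
  refine ⟨fun x => ?_, fun x y => ?_, fun x y => ?_⟩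
  · rw [impl_bot, impl_bot, dneg]
  · rw [impl_bot, himpl, dneg, inf_comm _ x, wom]
  · rw [impl_bot, himpl, sup_comm]
end

section
/- In a bounded dually weakly orthomodular lattice with greatest element 1, defining x → y := (x ∨ y)' ∨ y, we have: x → 0 = x', x → 1 = 1, 1 → x = x, and x → y = 1 implies x ≤ y. -/
/-!
Both nontrivial claims come from instances of the dual weak orthomodular law
`(x ⊔ y) ⊓ (x ⊔ (x ⊔ y)') = x`: with `x = ⊥, y = ⊤` it gives `⊤' = ⊥`, which yields `⊤ → x = x`;
and with the roles swapped, `(x ⊔ y) ⊓ (y ⊔ (x ⊔ y)') = y`, so if `(x ⊔ y)' ⊔ y = ⊤` then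
`y = x ⊔ y`, i.e. `x ≤ y`.
-/

section DuallyWeaklyOrthomodular

variable {L : Type*} [Lattice L] {f : L → L}

theorem compl_top_eq_bot_of_dwom [BoundedOrder L]
    (dwom : ∀ x y : L, (x ⊔ y) ⊓ (x ⊔ f (x ⊔ y)) = x) : f ⊤ = ⊥ := by
  simpa using dwom ⊥ ⊤

theorem le_of_compl_sup_sup_eq_top_of_dwom [OrderTop L]
    (dwom : ∀ x y : L, (x ⊔ y) ⊓ (x ⊔ f (x ⊔ y)) = x) {x y : L}
    (h : f (x ⊔ y) ⊔ y = ⊤) : x ≤ y := by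
  have hy : (x ⊔ y) ⊓ (f (x ⊔ y) ⊔ y) = y := by
    simpa only [sup_comm y] using dwom y x
  rw [h, inf_top_eq] at hy
  exact hy ▸ le_sup_left

end DuallyWeaklyOrthomodular

/-- In a bounded dually weakly orthomodular lattice with x → y := (x ⊔ y)' ⊔ y:
x → 0 = x', x → 1 = 1, 1 → x = x, and x → y = 1 implies x ≤ y. -/
theorem stmt_13 {L : Type*} [Lattice L] [BoundedOrder L] (f : L → L)
    (dwom : ∀ x y : L, (x ⊔ y) ⊓ (x ⊔ f (x ⊔ y)) = x)
    (impl : L → L → L) (himpl : ∀ x y : L, impl x y = f (x ⊔ y) ⊔ y) :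
    (∀ x : L, impl x ⊥ = f x) ∧
    (∀ x : L, impl x ⊤ = ⊤) ∧
    (∀ x : L, impl ⊤ x = x) ∧
    (∀ x y : L, impl x y = ⊤ → x ≤ y) := by
  refine ⟨fun x => by simp [himpl], fun x => by simp [himpl], fun x => ?_, fun x y h => ?_⟩
  · simp [himpl, compl_top_eq_bot_of_dwom dwom]
  · exact le_of_compl_sup_sup_eq_top_of_dwom dwom (himpl x y ▸ h)
end

section
/- A lattice L with unary operation ' is dually weakly orthomodular if and only if for every x ∈ L that is not the greatest element of L, there exists a map s : L → [0,1] such that s(b ∧ (a ∨ b')) = s(a) for all a ≤ b in L, and s⁻¹({0}) = (x], the principal ideal generated by x. -/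
/-!
With `a := x`, `b := x ⊔ y` the defining identity reads `b ⊓ (a ⊔ b') = a` for `a ≤ b`.
In a dually weakly orthomodular lattice the indicator of the complement of `(x]` is then
such a map. Conversely, a map vanishing exactly on `(x]` and respecting the identity sends
`b ⊓ (x ⊔ b')` to `s x = 0`, which forces `b ⊓ (x ⊔ b') ≤ x`; the reverse inequality always
holds, and for `x = ⊤` there is nothing to prove.
-/

section DuallyWeaklyOrthomodular

variable {L : Type*} [Lattice L] {f : L → L}

theorem dwom_iff_forall_le :
    (∀ x y : L, (x ⊔ y) ⊓ (x ⊔ f (x ⊔ y)) = x) ↔ ∀ a b : L, a ≤ b → b ⊓ (a ⊔ f b) = a := by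
  refine ⟨fun h a b hab => ?_, fun h x y => h x (x ⊔ y) le_sup_left⟩
  simpa only [sup_eq_right.mpr hab] using h a b

open Classical in
theorem exists_state_zero_iff_le (hf : ∀ a b : L, a ≤ b → b ⊓ (a ⊔ f b) = a) (x : L) :
    ∃ s : L → ℝ, (∀ y : L, s y ∈ Set.Icc (0 : ℝ) 1) ∧
      (∀ a b : L, a ≤ b → s (b ⊓ (a ⊔ f b)) = s a) ∧
      (∀ y : L, s y = 0 ↔ y ≤ x) := by
  refine ⟨fun y => if y ≤ x then 0 else 1, fun y => ?_, fun a b hab => by rw [hf a b hab],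
    fun y => ?_⟩ <;> by_cases hy : y ≤ x <;> simp [hy]

theorem inf_sup_le_of_state {s : L → ℝ} {x b : L}
    (hs : ∀ a b : L, a ≤ b → s (b ⊓ (a ⊔ f b)) = s a) (hzero : ∀ y : L, s y = 0 ↔ y ≤ x)
    (hxb : x ≤ b) : b ⊓ (x ⊔ f b) ≤ x :=
  (hzero _).mp ((hs x b hxb).trans ((hzero x).mpr le_rfl))

end DuallyWeaklyOrthomodular

/-- A lattice with a unary operation is dually weakly orthomodular iff for every x which is not
the greatest element there exists s : L → [0,1] with s(b ⊓ (a ⊔ b')) = s(a) for a ≤ b and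
s⁻¹({0}) = (x]. -/
theorem stmt_16 {L : Type*} [Lattice L] (f : L → L) :
    (∀ x y : L, (x ⊔ y) ⊓ (x ⊔ f (x ⊔ y)) = x) ↔
      (∀ x : L, ¬(∀ y : L, y ≤ x) →
        ∃ s : L → ℝ, (∀ y : L, s y ∈ Set.Icc (0 : ℝ) 1) ∧
          (∀ a b : L, a ≤ b → s (b ⊓ (a ⊔ f b)) = s a) ∧
          (∀ y : L, s y = 0 ↔ y ≤ x)) := by
  rw [dwom_iff_forall_le]
  refine ⟨fun hf x _ => exists_state_zero_iff_le hf x, fun h a b hab => ?_⟩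
  refine le_antisymm ?_ (le_inf hab le_sup_left)
  by_cases htop : ∀ y : L, y ≤ a
  · exact htop _
  · obtain ⟨s, -, hs, hzero⟩ := h a htop
    exact inf_sup_le_of_state hs hzero hab
end

section
/- Let L be a lattice with a complementation ' (x ∨ x' = 1 and x ∧ x' = 0) and s : L → [0,1] a map satisfying s(1) = 1 and s(x ∨ y') = s(x) + s(y') whenever x ≤ y. If additionally s((x ∨ y') ∨ (x' ∧ y)) = 1 whenever x ≤ y, then s(a ∨ (b ∧ a')) = s(b) for all a ≤ b; and if s(x ∨ (y ∧ (x ∨ y'))') = 1 whenever x ≤ y, then s(b ∧ (a ∨ b')) = s(a) for all a ≤ b. -/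
/-- Generalized measures satisfying (i)-(ii) and (iii) (resp. (iv)) lie in S₁(L) (resp. S₂(L)). -/
theorem stmt_17 {L : Type*} [Lattice L] [BoundedOrder L] (f : L → L)
    (hcomp1 : ∀ x : L, x ⊔ f x = ⊤) (hcomp2 : ∀ x : L, x ⊓ f x = ⊥)
    (s : L → ℝ) (hrange : ∀ y : L, s y ∈ Set.Icc (0 : ℝ) 1)
    (hi : s ⊤ = 1)
    (hii : ∀ x y : L, x ≤ y → s (x ⊔ f y) = s x + s (f y)) :
    ((∀ x y : L, x ≤ y → s ((x ⊔ f y) ⊔ (f x ⊓ y)) = 1) →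
      ∀ a b : L, a ≤ b → s (a ⊔ (b ⊓ f a)) = s b) ∧
    ((∀ x y : L, x ≤ y → s (x ⊔ f (y ⊓ (x ⊔ f y))) = 1) →
      ∀ a b : L, a ≤ b → s (b ⊓ (a ⊔ f b)) = s a) := by
  have hf : ∀ x : L, s (f x) = 1 - s x := by
    intro x
    have h := hii x x le_rfl
    rw [hcomp1 x, hi] at h
    linarith
  constructor
  · intro hiii a b hab
    set c := a ⊔ (b ⊓ f a) with hc
    have hcb : c ≤ b := sup_le hab inf_le_left
    have h1 : s (c ⊔ f b) = s c + s (f b) := hii c b hcb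
    have h2 : c ⊔ f b = (a ⊔ f b) ⊔ (f a ⊓ b) := by
      rw [hc, inf_comm]
      rw [sup_assoc, sup_assoc, sup_comm (f a ⊓ b) (f b)]
    have h3 : s ((a ⊔ f b) ⊔ (f a ⊓ b)) = 1 := hiii a b hab
    rw [h2, h3, hf b] at h1
    linarith
  · intro hiv a b hab
    set d := b ⊓ (a ⊔ f b) with hd
    have had : a ≤ d := le_inf hab le_sup_left
    have h1 : s (a ⊔ f d) = s a + s (f d) := hii a d had
    have h2 : s (a ⊔ f d) = 1 := hiv a b hab
    rw [h2, hf d] at h1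
    linarith
end

section
/- Let (L, ∨, ∧, ') be a dually weakly orthomodular lattice and define x ⊙ y := (x ∨ y') ∧ y and x → y := x' ∨ (x ∧ y). Then for all a, b, c ∈ L, a ≤ b → c implies a ⊙ b ≤ c. -/
theorem inf_sup_eq_of_le {L : Type*} [Lattice L] (f : L → L)
    (dwom : ∀ x y : L, (x ⊔ y) ⊓ (x ⊔ f (x ⊔ y)) = x) {x y : L} (h : x ≤ y) :
    y ⊓ (x ⊔ f y) = x := by
  simpa only [sup_eq_right.mpr h] using dwom x y

/-- In a dually weakly orthomodular lattice with x ⊙ y := (x ⊔ y') ⊓ y and x → y := x' ⊔ (x ⊓ y),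
a ≤ b → c implies a ⊙ b ≤ c. -/
theorem stmt_18 {L : Type*} [Lattice L] (f : L → L)
    (dwom : ∀ x y : L, (x ⊔ y) ⊓ (x ⊔ f (x ⊔ y)) = x) :
    ∀ a b c : L, a ≤ f b ⊔ (b ⊓ c) → (a ⊔ f b) ⊓ b ≤ c := by
  intro a b c h
  have hsup : a ⊔ f b ≤ b ⊓ c ⊔ f b := sup_le (h.trans_eq (sup_comm _ _)) le_sup_right
  calc (a ⊔ f b) ⊓ b ≤ b ⊓ (b ⊓ c ⊔ f b) := le_inf inf_le_right (inf_le_left.trans hsup)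
    _ = b ⊓ c := inf_sup_eq_of_le f dwom inf_le_left
    _ ≤ c := inf_le_right
end
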